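/- (Sufficiency of the local conditions.) Let T be a tree on vertex set containing sources p₁,…,p_m, sink q, and possibly other points in ℝ^n, where the path P_i in T connects p_i to q. For each edge e of T, let S_e = {i : e lies on P_i}, and define the cost of T as Σ_{edges e=xy} w(Σ_{i∈S_e} t_i)‖x−y‖. Suppose dual vectors p_i*, q* of p_i, q exist satisfying Σ_{i=1}^m w(t_i)p_i* + w(Σ t_i)q* = 0 and ‖Σ_{i∈I} w(t_i)p_i*‖* ≤ w(Σ_{i∈I} t_i) for every I ⊆ {1,…,m}. Then the cost of T is at least the cost of the star network centered at the origin: Σ w(t_i)‖p_i‖ + w(Σ t_i)‖q‖. -/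

import Mathlib

/-!
Pairing with the dual vectors and using the balancing condition, the star cost equals
`∑ i, ⟪w (t i) • p_i*, p i - q⟫`. Telescoping `p i - q` along the path from `p i` to `q` and
regrouping by edges turns this into `∑ e, ⟪∑ i ∈ S_e, w (t i) • p_i*, x_e - y_e⟫`, where `x_e → y_e`
is the direction in which the paths cross `e`: in a tree all paths towards `q` cross an edge the
same way. Each term is at most `‖∑ i ∈ S_e, w (t i) • p_i*‖* ‖x_e - y_e‖`, and the collapsing
condition bounds the dual norm by `w (∑ i ∈ S_e, t i)`.
-/

open scoped BigOperators

noncomputable def dualNorm {n : ℕ} (N : EuclideanSpace ℝ (Fin n) → ℝ)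
    (z : EuclideanSpace ℝ (Fin n)) : ℝ :=
  sSup ((fun x => (inner ℝ z x : ℝ)) '' {x | N x ≤ 1})

def IsNorm {n : ℕ} (N : EuclideanSpace ℝ (Fin n) → ℝ) : Prop :=
  (∀ x, 0 ≤ N x) ∧ (∀ x, N x = 0 ↔ x = 0) ∧
  (∀ (a : ℝ) (x : EuclideanSpace ℝ (Fin n)), N (a • x) = |a| * N x) ∧
  (∀ x y, N (x + y) ≤ N x + N y)

open scoped InnerProductSpace
open Finset

namespace IsNorm

variable {n : ℕ} {N : EuclideanSpace ℝ (Fin n) → ℝ}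

lemma map_zero (hN : IsNorm N) : N 0 = 0 := (hN.2.1 0).2 rfl

lemma pos_of_ne_zero (hN : IsNorm N) {x : EuclideanSpace ℝ (Fin n)} (hx : x ≠ 0) : 0 < N x :=
  (hN.1 x).lt_of_ne' (mt (hN.2.1 x).1 hx)

lemma convexOn (hN : IsNorm N) : ConvexOn ℝ Set.univ N := by
  refine ⟨convex_univ, fun x _ y _ a b ha hb _ => ?_⟩
  calc N (a • x + b • y) ≤ N (a • x) + N (b • y) := hN.2.2.2 _ _
    _ = a * N x + b * N y := by rw [hN.2.2.1, hN.2.2.1, abs_of_nonneg ha, abs_of_nonneg hb]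

lemma continuous (hN : IsNorm N) : Continuous N :=
  hN.convexOn.locallyLipschitz.continuous

lemma exists_norm_le_mul (hN : IsNorm N) : ∃ C, 0 ≤ C ∧ ∀ x, ‖x‖ ≤ C * N x := by
  -- `1 / N` is continuous, hence bounded, on the compact Euclidean unit sphere.
  have hinv : ContinuousOn (fun x => (N x)⁻¹) (Metric.sphere 0 1) :=
    hN.continuous.continuousOn.inv₀ fun x hx => (hN.pos_of_ne_zero (by rintro rfl; simp at hx)).ne'
  obtain ⟨C, hC⟩ := (isCompact_sphere 0 1).exists_bound_of_continuousOn hinv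
  refine ⟨max C 0, le_max_right _ _, fun x => ?_⟩
  rcases eq_or_ne x 0 with rfl | hx
  · simp [hN.map_zero]
  have hbound := hC (‖x‖⁻¹ • x) (by simp [norm_smul, hx])
  rw [Real.norm_eq_abs, abs_of_nonneg (inv_nonneg.2 (hN.1 _)), hN.2.2.1, abs_inv, abs_norm,
    mul_inv, inv_inv, ← div_eq_mul_inv, div_le_iff₀ (hN.pos_of_ne_zero hx)] at hbound
  exact hbound.trans (mul_le_mul_of_nonneg_right (le_max_left _ _) (hN.1 x))

lemma inner_le_dualNorm_mul (hN : IsNorm N) (z x : EuclideanSpace ℝ (Fin n)) :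
    ⟪z, x⟫_ℝ ≤ dualNorm N z * N x := by
  obtain ⟨C, hC0, hC⟩ := hN.exists_norm_le_mul
  have hbdd : BddAbove ((fun x => ⟪z, x⟫_ℝ) '' {x | N x ≤ 1}) := by
    refine ⟨‖z‖ * C, ?_⟩
    rintro _ ⟨u, hu, rfl⟩
    calc ⟪z, u⟫_ℝ ≤ ‖z‖ * ‖u‖ := real_inner_le_norm z u
      _ ≤ ‖z‖ * C := mul_le_mul_of_nonneg_left
          ((hC u).trans (mul_le_of_le_one_right hC0 hu)) (norm_nonneg z)
  rcases eq_or_ne x 0 with rfl | hx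
  · simp [hN.map_zero]
  have hNx := hN.pos_of_ne_zero hx
  have hunit : N ((N x)⁻¹ • x) ≤ 1 := by
    rw [hN.2.2.1, abs_inv, abs_of_pos hNx, inv_mul_cancel₀ hNx.ne']
  have hle : ⟪z, (N x)⁻¹ • x⟫_ℝ ≤ dualNorm N z := le_csSup hbdd ⟨_, hunit, rfl⟩
  rwa [real_inner_smul_right, inv_mul_le_iff₀ hNx, mul_comm] at hle

end IsNorm

namespace SimpleGraph

variable {V : Type*} {G : SimpleGraph V}

lemma Walk.sum_darts_sub {E : Type*} [AddCommGroup E] (f : V → E) {a b : V} (p : G.Walk a b) :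
    (p.darts.map fun d => f d.fst - f d.snd).sum = f a - f b := by
  induction p with
  | nil => simp
  | cons _ _ ih =>
    rw [Walk.darts_cons, List.map_cons, List.sum_cons, ih]
    abel

lemma Walk.IsTrail.reachable_deleteEdges_of_mem_darts {a b : V} {p : G.Walk a b}
    (hp : p.IsTrail) {d : G.Dart} (hd : d ∈ p.darts) :
    (G.deleteEdges {d.edge}).Reachable d.snd b := by
  induction p with
  | nil => simp at hd
  | cons h p ih =>
    rw [Walk.darts_cons, List.mem_cons] at hd
    rcases hd with rfl | hd
    · exact ⟨p.toDeleteEdge _ (List.nodup_cons.1 hp.edges_nodup).1⟩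
    · exact ih hp.of_cons hd

lemma IsAcyclic.dart_eq_of_mem_darts (hG : G.IsAcyclic) {a a' b : V} {p : G.Walk a b}
    {p' : G.Walk a' b} (hp : p.IsTrail) (hp' : p'.IsTrail) {d d' : G.Dart} (hd : d ∈ p.darts)
    (hd' : d' ∈ p'.darts) (he : d.edge = d'.edge) : d = d' := by
  rcases (dart_edge_eq_iff d d').1 he with h | rfl
  · exact h
  · -- The tails of the two trails would reconnect the endpoints of the edge, which is a bridge.
    have hsnd := hp.reachable_deleteEdges_of_mem_darts hd
    have hfst := hp'.reachable_deleteEdges_of_mem_darts hd'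
    rw [Dart.edge_symm] at hsnd
    exact (isAcyclic_iff_forall_adj_isBridge.1 hG d'.adj (hsnd.trans hfst.symm)).elim

variable {ι : Type*} {σ : ι → V} {ρ : V}

open Classical in
noncomputable def pathOrientation (W : ∀ i, G.Walk (σ i) ρ) (e : Sym2 V) : V × V :=
  if h : ∃ d : G.Dart, d.edge = e ∧ ∃ i, d ∈ (W i).darts then h.choose.toProd else e.out

lemma mk_pathOrientation (W : ∀ i, G.Walk (σ i) ρ) (e : Sym2 V) :
    s((pathOrientation W e).1, (pathOrientation W e).2) = e := by
  unfold pathOrientation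
  split_ifs with h
  · exact h.choose_spec.1
  · exact e.out_eq

lemma lift_pathOrientation {α : Type*} (W : ∀ i, G.Walk (σ i) ρ)
    (f : {f : V → V → α // ∀ a b, f a b = f b a}) (e : Sym2 V) :
    Sym2.lift f e = f.1 (pathOrientation W e).1 (pathOrientation W e).2 := by
  conv_lhs => rw [← mk_pathOrientation W e]
  rfl

lemma pathOrientation_edge (hG : G.IsAcyclic) {W : ∀ i, G.Walk (σ i) ρ}
    (hW : ∀ i, (W i).IsTrail) {i : ι} {d : G.Dart} (hd : d ∈ (W i).darts) :
    pathOrientation W d.edge = d.toProd := by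
  have h : ∃ d' : G.Dart, d'.edge = d.edge ∧ ∃ i, d' ∈ (W i).darts := ⟨d, rfl, i, hd⟩
  obtain ⟨hedge, j, hj⟩ := h.choose_spec
  rw [pathOrientation, dif_pos h, hG.dart_eq_of_mem_darts (hW j) (hW i) hj hd hedge]

end SimpleGraph

open SimpleGraph

section Routing

variable {V ι F : Type*} [Fintype ι] [NormedAddCommGroup F] [InnerProductSpace ℝ F]

lemma sum_mul_inner_add_mul_inner_eq_sum_inner_sub {a : ι → ℝ} {b : ℝ} {u x : ι → F} {v y : F}
    (hbal : ∑ i, a i • u i + b • v = 0) :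
    ∑ i, a i * ⟪u i, x i⟫_ℝ + b * ⟪v, y⟫_ℝ = ∑ i, ⟪a i • u i, x i - y⟫_ℝ := by
  have h := congrArg (fun z => ⟪z, y⟫_ℝ) hbal
  simp only [inner_add_left, sum_inner, real_inner_smul_left, inner_zero_left] at h
  simp only [inner_sub_right, real_inner_smul_left, sum_sub_distrib]
  linarith

lemma sum_inner_sub_eq_sum_edgeFinset [Fintype V] [DecidableEq V] {G : SimpleGraph V}
    [DecidableRel G.Adj] {σ : ι → V} {ρ : V} (hG : G.IsAcyclic) {W : ∀ i, G.Walk (σ i) ρ}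
    (hW : ∀ i, (W i).IsTrail) (pos : V → F) (c : ι → F) :
    ∑ i, ⟪c i, pos (σ i) - pos ρ⟫_ℝ =
      ∑ e ∈ G.edgeFinset, ⟪∑ i ∈ univ.filter (fun i => e ∈ (W i).edges), c i,
        pos (pathOrientation W e).1 - pos (pathOrientation W e).2⟫_ℝ := by
  set δ := fun e => pos (pathOrientation W e).1 - pos (pathOrientation W e).2
  have hpath : ∀ i, ⟪c i, pos (σ i) - pos ρ⟫_ℝ = ∑ e ∈ (W i).edges.toFinset, ⟪c i, δ e⟫_ℝ := by
    intro i
    rw [inner_sub_right, ← (W i).sum_darts_sub fun v => ⟪c i, pos v⟫_ℝ,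
      List.sum_toFinset _ (hW i).edges_nodup, Walk.edges, List.map_map]
    refine congrArg List.sum (List.map_congr_left fun d hd => ?_)
    simp only [Function.comp_apply, δ, pathOrientation_edge hG hW hd, inner_sub_right]
  simp only [hpath, sum_inner]
  refine Finset.sum_comm' fun i e => ?_
  simp only [mem_univ, true_and, List.mem_toFinset, mem_filter]
  exact ⟨fun h => ⟨h, mem_edgeFinset.2 ((W i).edges_subset_edgeSet h)⟩, And.left⟩

end Routing

/-- Sufficiency of the local balancing and collapsing conditions: any Gilbert
arborescence (tree) spanning the sources and the sink costs at least as much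
as the star through the origin. -/
theorem star_cost_le_tree_cost {n m : ℕ} (N : EuclideanSpace ℝ (Fin n) → ℝ)
    (hN : IsNorm N) (hNsymm : ∀ x, N (-x) = N x)
    (p : Fin m → EuclideanSpace ℝ (Fin n)) (q : EuclideanSpace ℝ (Fin n))
    (t : Fin m → ℝ) (w : ℝ → ℝ)
    (ps : Fin m → EuclideanSpace ℝ (Fin n)) (qs : EuclideanSpace ℝ (Fin n))
    (hps : ∀ i, (inner ℝ (ps i) (p i) : ℝ) = N (p i) ∧ dualNorm N (ps i) = 1)
    (hqs : (inner ℝ qs q : ℝ) = N q ∧ dualNorm N qs = 1)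
    (hbal : ∑ i, w (t i) • ps i + w (∑ i, t i) • qs = 0)
    (hcol : ∀ I : Finset (Fin m),
      dualNorm N (∑ i ∈ I, w (t i) • ps i) ≤ w (∑ i ∈ I, t i))
    -- the tree T
    (V : Type) [Fintype V] [DecidableEq V]
    (G : SimpleGraph V) [DecidableRel G.Adj] (hG : G.IsTree)
    (pos : V → EuclideanSpace ℝ (Fin n))
    (σ : Fin m → V) (ρ : V) (hσ : ∀ i, pos (σ i) = p i) (hρ : pos ρ = q)
    (W : ∀ i, G.Walk (σ i) ρ) (hW : ∀ i, (W i).IsPath) :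
    ∑ i, w (t i) * N (p i) + w (∑ i, t i) * N q ≤
      ∑ e ∈ G.edgeFinset,
        w (∑ i ∈ Finset.univ.filter (fun i => e ∈ (W i).edges), t i) *
          Sym2.lift ⟨fun a b => N (pos a - pos b),
            fun a b => by simp only []; rw [← neg_sub (pos b) (pos a), hNsymm]⟩ e := by
  calc ∑ i, w (t i) * N (p i) + w (∑ i, t i) * N q
      = ∑ i, ⟪w (t i) • ps i, pos (σ i) - pos ρ⟫_ℝ := by
        simp only [← (hps _).1, ← hqs.1, hσ, hρ]
        exact sum_mul_inner_add_mul_inner_eq_sum_inner_sub hbal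
    _ = ∑ e ∈ G.edgeFinset, ⟪∑ i ∈ univ.filter (fun i => e ∈ (W i).edges), w (t i) • ps i,
          pos (pathOrientation W e).1 - pos (pathOrientation W e).2⟫_ℝ :=
        sum_inner_sub_eq_sum_edgeFinset hG.isAcyclic (fun i => (hW i).isTrail) pos _
    _ ≤ _ := sum_le_sum fun e _ => by
      rw [lift_pathOrientation W]
      calc _ ≤ dualNorm N _ * N _ := hN.inner_le_dualNorm_mul _ _
        _ ≤ _ := mul_le_mul_of_nonneg_right (hcol _) (hN.1 _)
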